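/- Let M be a PKS and let φ be an LTL formula. If [M ⊨₃ φ] = ⊤, then [M ⊨_T φ] = ⊤; that is, every completion M′ of M satisfies [M′ ⊨ φ] = ⊤ under classical LTL semantics. -/

import Mathlib

set_option autoImplicit false

open Classical

noncomputable section

/-- Three-valued truth values: `0` is false (⊥), `1` is unknown (?), `2` is true (⊤),
linearly ordered by the information ordering ⊥ < ? < ⊤. -/
abbrev TV : Type := Fin 3

namespace TV

/-- The truth value ⊥ (false). -/
def ff : TV := 0
/-- The truth value ? (unknown/maybe). -/
def uu : TV := 1
/-- The truth value ⊤ (true). -/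
def tt : TV := 2

/-- `comp` swaps ⊤ and ⊥ and fixes ?. -/
def comp : TV → TV
  | ⟨0, _⟩ => tt
  | ⟨1, _⟩ => uu
  | _ => ff

end TV

/-- LTL formulae over a set `A` of atomic propositions (with the standard
derived/dual operators: falsum, disjunction, release, globally). -/
inductive LTL (A : Type) : Type
  | fls : LTL A
  | atom (a : A) : LTL A
  | neg (φ : LTL A) : LTL A
  | conj (φ ψ : LTL A) : LTL A
  | disj (φ ψ : LTL A) : LTL A
  | next (φ : LTL A) : LTL A
  | untl (φ ψ : LTL A) : LTL A
  | release (φ ψ : LTL A) : LTL A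
  | glob (φ : LTL A) : LTL A

namespace LTL

/-- The atomic propositions occurring in a formula. -/
def atoms {A : Type} : LTL A → Set A
  | .fls => ∅
  | .atom a => {a}
  | .neg φ => φ.atoms
  | .conj φ ψ => φ.atoms ∪ ψ.atoms
  | .disj φ ψ => φ.atoms ∪ ψ.atoms
  | .next φ => φ.atoms
  | .untl φ ψ => φ.atoms ∪ ψ.atoms
  | .release φ ψ => φ.atoms ∪ ψ.atoms
  | .glob φ => φ.atoms

/-- Renaming of the atomic propositions of a formula. -/
def map {A B : Type} (f : A → B) : LTL A → LTL B
  | .fls => .fls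
  | .atom a => .atom (f a)
  | .neg φ => .neg (φ.map f)
  | .conj φ ψ => .conj (φ.map f) (ψ.map f)
  | .disj φ ψ => .disj (φ.map f) (ψ.map f)
  | .next φ => .next (φ.map f)
  | .untl φ ψ => .untl (φ.map f) (ψ.map f)
  | .release φ ψ => .release (φ.map f) (ψ.map f)
  | .glob φ => .glob (φ.map f)

end LTL

/-- A Partial Kripke Structure over state universe `St` and atomic-proposition
universe `A`: a set `S` of states, a left-total transition relation `R ⊆ S × S`,
a set `S0 ⊆ S` of initial states, a set `AP` of atomic propositions, and a
three-valued labeling. -/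
structure PKS (St A : Type) where
  S : Set St
  R : Set (St × St)
  S0 : Set St
  AP : Set A
  L : St → A → TV
  R_dom : ∀ p ∈ R, p.1 ∈ S ∧ p.2 ∈ S
  leftTotal : ∀ s ∈ S, ∃ s' ∈ S, (s, s') ∈ R
  S0_sub : S0 ⊆ S

/-- A Kripke Structure is a PKS whose labeling never takes the value `?`. -/
def IsKS {St A : Type} (M : PKS St A) : Prop :=
  ∀ s ∈ M.S, ∀ a ∈ M.AP, M.L s a ≠ TV.uu

/-- `Refinement M M'` says that `M'` is a refinement of `M` (written `M ⪯ M'`). -/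
def Refinement {St A : Type} (M M' : PKS St A) : Prop :=
  M'.S = M.S ∧ M'.R = M.R ∧ M'.S0 = M.S0 ∧ M'.AP = M.AP ∧
    ∀ s ∈ M.S, ∀ a ∈ M.AP,
      (M.L s a = TV.tt → M'.L s a = TV.tt) ∧ (M.L s a = TV.ff → M'.L s a = TV.ff)

/-- `M'` is a completion of `M` iff `M'` is a KS refining `M`. -/
def IsCompletion {St A : Type} (M M' : PKS St A) : Prop :=
  Refinement M M' ∧ IsKS M'

/-- `Revision M M'` says that `M'` is a revision of `M`, i.e. `AP ⊆ AP'`. -/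
def Revision {St A : Type} (M M' : PKS St A) : Prop :=
  M.AP ⊆ M'.AP

/-- The suffix `πᵏ` of an infinite sequence. -/
def shift {St : Type} (π : ℕ → St) (k : ℕ) : ℕ → St := fun n => π (n + k)

/-- `π` is a path: all consecutive pairs are transitions of `M`. -/
def IsPath {St A : Type} (M : PKS St A) (π : ℕ → St) : Prop :=
  ∀ i, (π i, π (i + 1)) ∈ M.R

/-- Three-valued LTL semantics `[(L, π) ⊨₃ φ]` of a formula on an infinite
sequence of states, w.r.t. a three-valued labeling `L`. -/
def sat3 {St A : Type} (L : St → A → TV) : LTL A → (ℕ → St) → TV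
  | .fls, _ => TV.ff
  | .atom a, π => L (π 0) a
  | .neg φ, π => TV.comp (sat3 L φ π)
  | .conj φ ψ, π => min (sat3 L φ π) (sat3 L ψ π)
  | .disj φ ψ, π => max (sat3 L φ π) (sat3 L ψ π)
  | .next φ, π => sat3 L φ (shift π 1)
  | .untl φ ψ, π =>
      ⨆ j : ℕ, min (⨅ i ∈ Finset.range j, sat3 L φ (shift π i)) (sat3 L ψ (shift π j))
  | .release φ ψ, π =>
      ⨅ j : ℕ, max (⨆ i ∈ Finset.range j, sat3 L φ (shift π i)) (sat3 L ψ (shift π j))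
  | .glob φ, π => ⨅ j : ℕ, sat3 L φ (shift π j)

/-- `[(M, s) ⊨₃ φ]`: minimum over all paths of `M` starting in `s`. -/
def stateSat3 {St A : Type} (M : PKS St A) (s : St) (φ : LTL A) : TV :=
  ⨅ π ∈ {π : ℕ → St | IsPath M π ∧ π 0 = s}, sat3 M.L φ π

/-- `[M ⊨₃ φ]`: minimum over all initial states. -/
def modelSat3 {St A : Type} (M : PKS St A) (φ : LTL A) : TV :=
  ⨅ s ∈ M.S0, stateSat3 M s φ

/-- Classical two-valued LTL satisfaction of a formula on an infinite sequence
of states (an atom holds iff its label is ⊤). -/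
def satC {St A : Type} (L : St → A → TV) : LTL A → (ℕ → St) → Prop
  | .fls, _ => False
  | .atom a, π => L (π 0) a = TV.tt
  | .neg φ, π => ¬ satC L φ π
  | .conj φ ψ, π => satC L φ π ∧ satC L ψ π
  | .disj φ ψ, π => satC L φ π ∨ satC L ψ π
  | .next φ, π => satC L φ (shift π 1)
  | .untl φ ψ, π => ∃ j, satC L ψ (shift π j) ∧ ∀ i < j, satC L φ (shift π i)
  | .release φ ψ, π => ∀ j, satC L ψ (shift π j) ∨ ∃ i < j, satC L φ (shift π i)
  | .glob φ, π => ∀ j, satC L φ (shift π j)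

/-- `[M ⊨ φ] = ⊤` for a KS `M` under the classical semantics: every path
starting in an initial state satisfies `φ`. -/
def modelSatC {St A : Type} (M : PKS St A) (φ : LTL A) : Prop :=
  ∀ π, IsPath M π → π 0 ∈ M.S0 → satC M.L φ π

/-- The thorough LTL semantics `[M ⊨_T φ]`. -/
def modelSatT {St A : Type} (M : PKS St A) (φ : LTL A) : TV :=
  if ∀ M', IsCompletion M M' → modelSatC M' φ then TV.tt
  else if ∀ M', IsCompletion M M' → ¬ modelSatC M' φ then TV.ff
  else TV.uu

/-- Topological proof clauses for a PKS: propositional (TPP), transitions-from-state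
(TPT) and initial-states (TPI) clauses. -/
inductive TPClause (St A : Type) : Type
  | tpp (s : St) (a : A) (v : TV) : TPClause St A
  | tpt (s : St) (T : Set St) : TPClause St A
  | tpi (S0 : Set St) : TPClause St A

/-- A TP-clause is a TP-clause *for* `M` if its components live in `M`. -/
def ClauseFor {St A : Type} (M : PKS St A) : TPClause St A → Prop
  | .tpp s a _ => s ∈ M.S ∧ a ∈ M.AP
  | .tpt s T => s ∈ M.S ∧ T ⊆ M.S
  | .tpi S0 => S0 = M.S0

/-- `M'` is `Γ`-related to `M`. -/
def GammaRelated {St A : Type} (Γ : Set (TPClause St A)) (M M' : PKS St A) : Prop :=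
  M.AP ⊆ M'.AP ∧
  (∀ s a v, TPClause.tpp s a v ∈ Γ → v = M'.L s a) ∧
  (∀ s T, TPClause.tpt s T ∈ Γ → T = {s' | s' ∈ M'.S ∧ (s, s') ∈ M'.R}) ∧
  (∀ S0, TPClause.tpi S0 ∈ Γ → S0 = M'.S0)

/-- `Ω` is an `x`-topological proof (`x`-TP) for `φ` in `M`:
`[M ⊨₃ φ] = x` and every `Ω`-related PKS has value ≥ x. -/
def IsXTP {St A : Type} (Ω : Set (TPClause St A)) (M : PKS St A) (φ : LTL A) (x : TV) : Prop :=
  modelSat3 M φ = x ∧ ∀ M' : PKS St A, GammaRelated Ω M M' → x ≤ modelSat3 M' φ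

/-- `M'` is an `Ω_x`-revision of `M`: `M'` is `Ω`-related to `M`
(where `Ω` is an `x`-TP for the property of interest in `M`). -/
def OmegaRevision {St A : Type} (Ω : Set (TPClause St A)) (M M' : PKS St A) : Prop :=
  GammaRelated Ω M M'

/-! ### Complement closure, approximations, and `⊨*` -/

/-- The complement-closed version `M_c` of `M`: atomic propositions
`AP_c = AP ∪ {ᾱ | α ∈ AP}` (`.inl α` is `α`, `.inr α` is `ᾱ`). -/
def PKS.compClosed {St A : Type} (M : PKS St A) : PKS St (A ⊕ A) where
  S := M.S
  R := M.R
  S0 := M.S0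
  AP := Sum.inl '' M.AP ∪ Sum.inr '' M.AP
  L := fun s x => Sum.rec (fun a => M.L s a) (fun a => TV.comp (M.L s a)) x
  R_dom := M.R_dom
  leftTotal := M.leftTotal
  S0_sub := M.S0_sub

/-- The pessimistic approximation `M_pes` (every `?` becomes ⊥). -/
def PKS.pes {St A : Type} (M : PKS St A) : PKS St (A ⊕ A) :=
  { M.compClosed with
    L := fun s x => if M.compClosed.L s x = TV.uu then TV.ff else M.compClosed.L s x }

/-- The optimistic approximation `M_opt` (every `?` becomes ⊤). -/
def PKS.opt {St A : Type} (M : PKS St A) : PKS St (A ⊕ A) :=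
  { M.compClosed with
    L := fun s x => if M.compClosed.L s x = TV.uu then TV.tt else M.compClosed.L s x }

mutual
/-- Negation normal form of `φ` over complement-closed propositions
(`¬α` becomes `ᾱ = .inr α`). -/
def normPos {A : Type} : LTL A → LTL (A ⊕ A)
  | .fls => .fls
  | .atom a => .atom (.inl a)
  | .neg φ => normNeg φ
  | .conj φ ψ => .conj (normPos φ) (normPos ψ)
  | .disj φ ψ => .disj (normPos φ) (normPos ψ)
  | .next φ => .next (normPos φ)
  | .untl φ ψ => .untl (normPos φ) (normPos ψ)
  | .release φ ψ => .release (normPos φ) (normPos ψ)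
  | .glob φ => .glob (normPos φ)

/-- `normNeg φ` is `norm(φ)`: the negation normal form of `¬φ`, with negated
atoms `¬α` replaced by the complement-closed propositions `ᾱ = .inr α`. -/
def normNeg {A : Type} : LTL A → LTL (A ⊕ A)
  | .fls => .neg .fls
  | .atom a => .atom (.inr a)
  | .neg φ => normPos φ
  | .conj φ ψ => .disj (normNeg φ) (normNeg ψ)
  | .disj φ ψ => .conj (normNeg φ) (normNeg ψ)
  | .next φ => .next (normNeg φ)
  | .untl φ ψ => .release (normNeg φ) (normNeg ψ)
  | .release φ ψ => .untl (normNeg φ) (normNeg ψ)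
  | .glob φ => .untl (.neg .fls) (normNeg φ)
end

/-- `A ⊨* φ` for a KS `A` over complement-closed propositions: no path of `A`
starting in an initial state satisfies `norm(φ)` under classical semantics. -/
def satStar {St A : Type} (K : PKS St (A ⊕ A)) (φ : LTL A) : Prop :=
  ∀ π, IsPath K π → π 0 ∈ K.S0 → ¬ satC K.L (normNeg φ) π

/-! ### SNF encoding of a KS -/

/-- Finite syntactic disjunction of a finite set of formulae. -/
def bigOr {B C : Type} (T : Finset C) (f : C → LTL B) : LTL B :=
  (T.toList.map f).foldr LTL.disj LTL.fls

/-- The SNF initial clause `c_i = ⋁_{s ∈ S₀} p(s)`. State propositions `p(s)`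
are encoded as `.inr s`, ordinary propositions as `.inl p`. -/
def ciClause {St P : Type} [Fintype St] (K : PKS St P) : LTL (P ⊕ St) :=
  bigOr K.S0.toFinite.toFinset (fun s => LTL.atom (Sum.inr s))

/-- The SNF clause `G(¬p(s) ∨ X(⋁_{(s,s') ∈ R} p(s')))`. -/
def crClause {St P : Type} [Fintype St] (K : PKS St P) (s : St) : LTL (P ⊕ St) :=
  .glob (.disj (.neg (.atom (Sum.inr s)))
    (.next (bigOr {s' | (s, s') ∈ K.R}.toFinite.toFinset (fun s' => LTL.atom (Sum.inr s')))))

/-- The SNF clause `G(¬p(s) ∨ α)`. -/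
def clT {St P : Type} (s : St) (p : P) : LTL (P ⊕ St) :=
  .glob (.disj (.neg (.atom (Sum.inr s))) (.atom (Sum.inl p)))

/-- The SNF clause `G(¬p(s) ∨ ¬α)`. -/
def clF {St P : Type} (s : St) (p : P) : LTL (P ⊕ St) :=
  .glob (.disj (.neg (.atom (Sum.inr s))) (.neg (.atom (Sum.inl p))))

/-- The SNF clause `G(¬p(s) ∨ ¬p(s'))`. -/
def cregClause {St P : Type} (s s' : St) : LTL (P ⊕ St) :=
  .glob (.disj (.neg (.atom (Sum.inr s))) (.neg (.atom (Sum.inr s'))))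

/-- The clause set `C_KS = {c_i} ∪ CR ∪ CL_⊤ ∪ CL_⊥` encoding a KS. -/
def CKSset {St P : Type} [Fintype St] (K : PKS St P) : Set (LTL (P ⊕ St)) :=
  {ciClause K} ∪
  {f | ∃ s ∈ K.S, f = crClause K s} ∪
  {f | ∃ s ∈ K.S, ∃ p ∈ K.AP, K.L s p = TV.tt ∧ f = clT s p} ∪
  {f | ∃ s ∈ K.S, ∃ p ∈ K.AP, K.L s p = TV.ff ∧ f = clF s p}

/-- The clause set `C_REG = {G(¬p(s) ∨ ¬p(s')) | s, s' ∈ S, s ≠ s'}`. -/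
def CREGset {St P : Type} (K : PKS St P) : Set (LTL (P ⊕ St)) :=
  {f | ∃ s ∈ K.S, ∃ s' ∈ K.S, s ≠ s' ∧ f = cregClause s s'}

/-- The SNF encoding `C_A = C_KS ∪ C_REG` of a KS. -/
def CAset {St P : Type} [Fintype St] (K : PKS St P) : Set (LTL (P ⊕ St)) :=
  CKSset K ∪ CREGset K

/-- Suffix of an infinite word. -/
def shiftW {B : Type} (σ : ℕ → Set B) (k : ℕ) : ℕ → Set B := fun n => σ (n + k)

/-- Standard LTL satisfaction over infinite words over subsets of `B`. -/
def satW {B : Type} : LTL B → (ℕ → Set B) → Prop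
  | .fls, _ => False
  | .atom a, σ => a ∈ σ 0
  | .neg φ, σ => ¬ satW φ σ
  | .conj φ ψ, σ => satW φ σ ∧ satW ψ σ
  | .disj φ ψ, σ => satW φ σ ∨ satW ψ σ
  | .next φ, σ => satW φ (shiftW σ 1)
  | .untl φ ψ, σ => ∃ j, satW ψ (shiftW σ j) ∧ ∀ i < j, satW φ (shiftW σ i)
  | .release φ ψ, σ => ∀ j, satW ψ (shiftW σ j) ∨ ∃ i < j, satW φ (shiftW σ i)
  | .glob φ, σ => ∀ j, satW φ (shiftW σ j)

/-- A word satisfies a set `C` of clauses iff it satisfies `η(C) = ⋀_{c ∈ C} c`. -/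
def WordSatSet {B : Type} (σ : ℕ → Set B) (C : Set (LTL B)) : Prop :=
  ∀ c ∈ C, satW c σ

/-- A set of clauses is unsatisfiable iff `η(C)` has no model. -/
def UnsatSet {B : Type} (C : Set (LTL B)) : Prop :=
  ¬ ∃ σ : ℕ → Set B, WordSatSet σ C

/-- The set of TP-clauses extracted from a set `C'` of SNF clauses of the
encoding of an approximation `K` of `M` (rules of the extraction table). -/
def extractTP {St A : Type} [Fintype St] (M : PKS St A) (K : PKS St (A ⊕ A))
    (C' : Set (LTL ((A ⊕ A) ⊕ St))) : Set (TPClause St A) :=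
  {c | (c = TPClause.tpi M.S0 ∧ ciClause K ∈ C')
    ∨ (∃ s : St, c = TPClause.tpt s {s' | (s, s') ∈ M.R} ∧ crClause K s ∈ C')
    ∨ (∃ s a, c = TPClause.tpp s a (M.L s a) ∧
        (clT s (Sum.inl a) ∈ C' ∨ clF s (Sum.inr a) ∈ C'))
    ∨ (∃ s a, c = TPClause.tpp s a (TV.comp (M.L s a)) ∧
        (clF s (Sum.inl a) ∈ C' ∨ clT s (Sum.inr a) ∈ C'))}

end

/-!
A path on which `φ` has the definite value ⊤ or ⊥ in the three-valued semantics gets that value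
from definite labels only, and these are kept by every refinement. Proving the ⊤ and ⊥ cases
together (negation swaps them), induction on `φ` shows that such a path satisfies, respectively
falsifies, `φ` classically in every refinement. A completion has the same paths and initial
states as `M`, and `[M ⊨₃ φ] = ⊤` gives the value ⊤ on every initial path.
-/

namespace TV

theorem comp_eq_tt (v : TV) : comp v = tt ↔ v = ff := by revert v; decide

theorem comp_eq_ff (v : TV) : comp v = ff ↔ v = tt := by revert v; decide

theorem min_eq_tt (v w : TV) : min v w = tt ↔ v = tt ∧ w = tt := min_eq_top

theorem min_eq_ff (v w : TV) : min v w = ff ↔ v = ff ∨ w = ff := min_eq_bot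

theorem max_eq_tt (v w : TV) : max v w = tt ↔ v = tt ∨ w = tt := max_eq_top

theorem max_eq_ff (v w : TV) : max v w = ff ↔ v = ff ∧ w = ff := max_eq_bot

theorem iInf_eq_tt {ι : Sort*} (f : ι → TV) : ⨅ i, f i = tt ↔ ∀ i, f i = tt := iInf_eq_top

theorem iSup_eq_ff {ι : Sort*} (f : ι → TV) : ⨆ i, f i = ff ↔ ∀ i, f i = ff := iSup_eq_bot

theorem iSup_eq_tt {ι : Sort*} (f : ι → TV) : ⨆ i, f i = tt ↔ ∃ i, f i = tt := by
  have huu : ∀ v : TV, uu < v ↔ v = tt := by decide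
  simp only [← huu, lt_iSup_iff]

theorem iInf_eq_ff {ι : Sort*} (f : ι → TV) : ⨅ i, f i = ff ↔ ∃ i, f i = ff := by
  have huu : ∀ v : TV, v < uu ↔ v = ff := by decide
  simp only [← huu, iInf_lt_iff]

end TV

theorem satC_of_sat3_eq_tt_and_not_satC_of_sat3_eq_ff {St A : Type} {S : Set St} {P : Set A}
    {L L' : St → A → TV}
    (hL : ∀ s ∈ S, ∀ a ∈ P, (L s a = TV.tt → L' s a = TV.tt) ∧ (L s a = TV.ff → L' s a = TV.ff))
    {φ : LTL A} (hφ : φ.atoms ⊆ P) {π : ℕ → St} (hπ : ∀ i, π i ∈ S) :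
    (sat3 L φ π = TV.tt → satC L' φ π) ∧ (sat3 L φ π = TV.ff → ¬ satC L' φ π) := by
  induction φ generalizing π with
  | fls => simp only [sat3, satC]; decide
  | atom a =>
    obtain ⟨htt, hff⟩ := hL _ (hπ 0) a (hφ rfl)
    simp only [sat3, satC]
    exact ⟨htt, fun h => by rw [hff h]; decide⟩
  | neg φ ih =>
    simp only [sat3, satC, TV.comp_eq_tt, TV.comp_eq_ff, not_not]
    exact (ih hφ hπ).symm
  | conj φ ψ ihφ ihψ =>
    obtain ⟨hφ₁, hφ₂⟩ := Set.union_subset_iff.mp hφ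
    simp only [sat3, satC, TV.min_eq_tt, TV.min_eq_ff]
    have hl := ihφ hφ₁ hπ
    have hr := ihψ hφ₂ hπ
    tauto
  | disj φ ψ ihφ ihψ =>
    obtain ⟨hφ₁, hφ₂⟩ := Set.union_subset_iff.mp hφ
    simp only [sat3, satC, TV.max_eq_tt, TV.max_eq_ff]
    have hl := ihφ hφ₁ hπ
    have hr := ihψ hφ₂ hπ
    tauto
  | next φ ih => exact ih hφ fun i => hπ (i + 1)
  | untl φ ψ ihφ ihψ =>
    obtain ⟨hφ₁, hφ₂⟩ := Set.union_subset_iff.mp hφ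
    have hl := fun k => ihφ hφ₁ (π := shift π k) fun i => hπ (i + k)
    have hr := fun k => ihψ hφ₂ (π := shift π k) fun i => hπ (i + k)
    simp only [sat3, satC, TV.iSup_eq_tt, TV.iSup_eq_ff, TV.min_eq_tt, TV.min_eq_ff,
      TV.iInf_eq_tt, TV.iInf_eq_ff, Finset.mem_range]
    refine ⟨fun ⟨j, hlj, hrj⟩ => ⟨j, (hr j).1 hrj, fun i hi => (hl i).1 (hlj i hi)⟩,
      fun h ⟨j, hrj, hlj⟩ => ?_⟩
    rcases h j with ⟨i, hi, hli⟩ | hrj'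
    exacts [(hl i).2 hli (hlj i hi), (hr j).2 hrj' hrj]
  | release φ ψ ihφ ihψ =>
    obtain ⟨hφ₁, hφ₂⟩ := Set.union_subset_iff.mp hφ
    have hl := fun k => ihφ hφ₁ (π := shift π k) fun i => hπ (i + k)
    have hr := fun k => ihψ hφ₂ (π := shift π k) fun i => hπ (i + k)
    simp only [sat3, satC, TV.iSup_eq_tt, TV.iSup_eq_ff, TV.max_eq_tt, TV.max_eq_ff,
      TV.iInf_eq_tt, TV.iInf_eq_ff, Finset.mem_range]
    refine ⟨fun h j => ?_, fun ⟨j, hlj, hrj⟩ h => ?_⟩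
    · rcases h j with ⟨i, hi, hli⟩ | hrj
      exacts [Or.inr ⟨i, hi, (hl i).1 hli⟩, Or.inl ((hr j).1 hrj)]
    · rcases h j with hrj' | ⟨i, hi, hli⟩
      exacts [(hr j).2 hrj hrj', (hl i).2 (hlj i hi) hli]
  | glob φ ih =>
    have h := fun k => ih hφ (π := shift π k) fun i => hπ (i + k)
    simp only [sat3, satC, TV.iInf_eq_tt, TV.iInf_eq_ff]
    exact ⟨fun hj j => (h j).1 (hj j), fun ⟨j, hj⟩ hc => (h j).2 hj (hc j)⟩

theorem IsPath.mem_S {St A : Type} {M : PKS St A} {π : ℕ → St} (hπ : IsPath M π) (i : ℕ) :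
    π i ∈ M.S :=
  (M.R_dom _ (hπ i)).1

theorem sat3_eq_tt_of_modelSat3_eq_tt {St A : Type} {M : PKS St A} {φ : LTL A}
    (h : modelSat3 M φ = TV.tt) {π : ℕ → St} (hπ : IsPath M π) (h0 : π 0 ∈ M.S0) :
    sat3 M.L φ π = TV.tt := by
  simp only [modelSat3, stateSat3, TV.iInf_eq_tt] at h
  exact h _ h0 π ⟨hπ, rfl⟩

/-- If `[M ⊨₃ φ] = ⊤` then `[M ⊨_T φ] = ⊤`; that is, every completion
`M'` of `M` satisfies `[M' ⊨ φ] = ⊤` under classical LTL semantics. -/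
theorem three_valued_true_implies_thorough_true {St A : Type} (M : PKS St A) (φ : LTL A)
    (hatoms : φ.atoms ⊆ M.AP)
    (h : modelSat3 M φ = TV.tt) :
    modelSatT M φ = TV.tt ∧ ∀ M' : PKS St A, IsCompletion M M' → modelSatC M' φ := by
  have hcompl : ∀ M' : PKS St A, IsCompletion M M' → modelSatC M' φ := by
    rintro M' ⟨⟨-, hR, hS0, -, hL⟩, -⟩ π hπ' h0
    have hπ : IsPath M π := fun i => hR ▸ hπ' i
    exact (satC_of_sat3_eq_tt_and_not_satC_of_sat3_eq_ff hL hatoms hπ.mem_S).1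
      (sat3_eq_tt_of_modelSat3_eq_tt h hπ (hS0 ▸ h0))
  exact ⟨if_pos hcompl, hcompl⟩
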